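/- Let f be a Markov interval map and x ∈ E_f. Then for every i ∈ {1,…,n}: T_i* T_i = Σ_{j=1}^n a_{ij} T_j T_j* + â_{i,ι(x)} P_{e(x)}, where P_{e(x)} is the orthogonal projection onto ℂ δ_{e(x)}. -/

import Mathlib

open scoped Classical ENNReal

noncomputable section

/-- Partition and branch data for a Markov interval map with `n` Markov
subintervals.  `cm j` is the point `c_j⁻` and `cp j` is `c_j⁺` (with
`cm 0 = cp 0 = c₀` and `cm n = cp n = c_n`).  `f` is the globally defined map,
`F j` is the branch of `f` on the `j`-th Markov interval (indexed by
`j = 0, …, n-1`, corresponding to the interval `I_{j+1}` of the paper) and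
`F' j` is the derivative of that branch. -/
structure MarkovSystem (n : ℕ) where
  cm : ℕ → ℝ
  cp : ℕ → ℝ
  f : ℝ → ℝ
  F : ℕ → ℝ → ℝ
  F' : ℕ → ℝ → ℝ
  two_le : 2 ≤ n
  cm_zero : cm 0 = cp 0
  cm_n : cm n = cp n
  cm_le_cp : ∀ j ≤ n, cm j ≤ cp j
  cp_lt_cm : ∀ j < n, cp j < cm (j + 1)

namespace MarkovSystem

variable {n : ℕ} (M : MarkovSystem n)

/-- The Markov interval `I_{j+1} = [c_j⁺, c_{j+1}⁻]` (for `j < n`). -/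
def Ipart (j : ℕ) : Set ℝ := Set.Icc (M.cp j) (M.cm (j + 1))

/-- The escape interval `E_j = (c_j⁻, c_j⁺)` (for `1 ≤ j ≤ n-1`). -/
def Epart (j : ℕ) : Set ℝ := Set.Ioo (M.cm j) (M.cp j)

/-- The ambient interval `I = [c₀, c_n]`. -/
def itv : Set ℝ := Set.Icc (M.cm 0) (M.cm n)

/-- The domain of `f`, namely `⋃_{j=1}^n I_j`. -/
def dom : Set ℝ := ⋃ j ∈ Finset.range n, M.Ipart j

/-- The set `Γ` of partition boundary points. -/
def Gamma : Set ℝ := {y | ∃ j ≤ n, y = M.cm j ∨ y = M.cp j}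

/-- `q`-fold image of a set under `f`, applying `f` only where it is defined. -/
def iterImage : ℕ → Set ℝ → Set ℝ
  | 0, S => S
  | q + 1, S => M.f '' (iterImage q S ∩ M.dom)

/-- `f^k(x)` is defined, i.e. all earlier iterates lie in the domain. -/
def definedUpTo (k : ℕ) (x : ℝ) : Prop := ∀ l < k, M.f^[l] x ∈ M.dom

/-- The orbit equivalence relation `R_f`. -/
def Rrel (x y : ℝ) : Prop :=
  ∃ p q : ℕ, M.definedUpTo p x ∧ M.definedUpTo q y ∧ M.f^[p] x = M.f^[q] y

/-- The generalized orbit `R_f(x)` of a point `x ∈ I`. -/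
def Rclass (x : ℝ) : Set ℝ := {y | y ∈ M.itv ∧ M.Rrel x y}

/-- The maximal invariant set `Ω_f`. -/
def Omega : Set ℝ := {x | x ∈ M.itv ∧ ∀ k, M.f^[k] x ∈ M.dom}

/-- The escape set `E_f = I \ Ω_f`. -/
def Esc : Set ℝ := M.itv \ M.Omega

/-- The regular set `Λ_f = Ω_f \ R_f(Γ)`. -/
def Lambda : Set ℝ := {x | x ∈ M.Omega ∧ ∀ γ ∈ M.Gamma, ¬ M.Rrel x γ}

/-- The escape time of a point of the escape set. -/
def tau (x : ℝ) : ℕ := sInf {k | M.f^[k] x ∉ M.dom}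

/-- The final escape point `e(x) = f^{τ(x)}(x)`. -/
def e (x : ℝ) : ℝ := M.f^[M.tau x] x

/-- The transition-matrix condition `a_{ij} = 1`, i.e. `f(int I_i) ⊇ int I_j`. -/
def trans (i j : ℕ) : Prop := interior (M.Ipart j) ⊆ M.F i '' interior (M.Ipart i)

/-- The escape-transition condition `â_{ik} = 1`, i.e. `int I_i ∩ f⁻¹(E_k) ≠ ∅`. -/
def ahat (i k : ℕ) : Prop := (interior (M.Ipart i) ∩ M.F i ⁻¹' M.Epart k).Nonempty

end MarkovSystem

/-- The defining properties (P1)-(P4) of a Markov interval map, together with the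
compatibility of the global map `f` with the branches `F j`:  `f` agrees with `F j`
on `I_j` except possibly at a boundary point shared with an adjacent interval,
where `f` is given by one of the two adjacent branches. -/
structure IsMarkov {n : ℕ} (M : MarkovSystem n) : Prop where
  compat₁ : ∀ j < n, ∀ x ∈ M.Ipart j, (∀ k < n, k ≠ j → x ∉ M.Ipart k) → M.f x = M.F j x
  compat₂ : ∀ x ∈ M.dom, ∃ j, j < n ∧ x ∈ M.Ipart j ∧ M.f x = M.F j x
  maps_into : ∀ j < n, M.F j '' M.Ipart j ⊆ M.itv
  onto : M.itv ⊆ ⋃ j ∈ Finset.range n, M.F j '' M.Ipart j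
  markov : ∀ i < n, ∃ S T : Set ℕ, S ⊆ {j | j < n} ∧ T ⊆ {j | 1 ≤ j ∧ j < n} ∧
    M.F i '' M.Ipart i = (⋃ j ∈ S, M.Ipart j) ∪ (⋃ j ∈ T, M.Epart j)
  deriv : ∀ i < n, ∀ x ∈ M.Ipart i, HasDerivWithinAt (M.F i) (M.F' i x) (M.Ipart i) x
  derivCont : ∀ i < n, ContinuousOn (M.F' i) (M.Ipart i)
  mono : ∀ i < n, StrictMonoOn (M.F i) (M.Ipart i) ∨ StrictAntiOn (M.F i) (M.Ipart i)
  expansive : ∃ b > 1, ∀ i < n, ∀ x ∈ M.Ipart i, b < |M.F' i x|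
  aperiodic : ∀ i < n, ∃ q, M.dom ⊆ M.iterImage q (M.Ipart i)

namespace MarkovSystem

variable {n : ℕ} (M : MarkovSystem n)

/-- The Hilbert space `H_x = ℓ²(R_f(x))`. -/
abbrev Hsp (x : ℝ) : Type _ := lp (fun _ : M.Rclass x => ℂ) 2

/-- The canonical orthonormal basis vector `δ_z` of `H_x`, for `z ∈ R_f(x)`. -/
def dvec {x : ℝ} (z : M.Rclass x) : M.Hsp x := lp.single 2 z 1

/-- `T` is the bounded operator `T_i` on `H_x`, determined on the basis by
`T_i δ_y = δ_{(f|_{I_i})⁻¹(y)}` if `y ∈ f(I_i)` and `T_i δ_y = 0` otherwise. -/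
def IsBranchOp (x : ℝ) (i : ℕ) (T : M.Hsp x →L[ℂ] M.Hsp x) : Prop :=
  (∀ z w : M.Rclass x, (w : ℝ) ∈ M.Ipart i → M.F i w = (z : ℝ) →
      T (M.dvec z) = M.dvec w) ∧
  (∀ z : M.Rclass x, (z : ℝ) ∉ M.F i '' M.Ipart i → T (M.dvec z) = 0)

/-- `Pe` is the rank-one orthogonal projection onto `ℂ δ_{e(x)}`. -/
def IsEscProj (x : ℝ) (Pe : M.Hsp x →L[ℂ] M.Hsp x) : Prop :=
  ∀ z : M.Rclass x, Pe (M.dvec z) = if (z : ℝ) = M.e x then M.dvec z else 0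

end MarkovSystem

/-!
Both sides act diagonally on the basis `δ_z`, `z ∈ R_f(x)`: `T_i^* T_i δ_z = δ_z` exactly when
`z ∈ f(I_i)`, and `T_j T_j^* δ_z = δ_z` exactly when `z ∈ I_j`. The boundary set `Γ` is forward
invariant (an endpoint of `I_i` goes to an extreme point of the Markov image `f(I_i)`, and these
lie in `Γ`), while the orbit of `x` ends at `e(x)` in the open gap `E_{ι(x)}`; hence `R_f(x)`
misses `Γ`. So a point `z ∈ R_f(x) ∩ dom f` lies in the interior of exactly one `I_j`, and the
Markov property gives `z ∈ f(I_i) ↔ a_{ij} = 1`; the only point of `R_f(x)` outside `dom f` is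
`e(x)`, and `e(x) ∈ f(I_i) ↔ â_{i,ι(x)} = 1`.
-/

namespace MarkovSystem

variable {n : ℕ} (M : MarkovSystem n)

lemma cp_lt_cm_of_lt {j k : ℕ} (hjk : j < k) (hk : k ≤ n) : M.cp j < M.cm k := by
  induction k, hjk using Nat.le_induction with
  | base => exact M.cp_lt_cm j (by omega)
  | succ k hjk ih =>
    exact (ih (by omega)).trans_le
      ((M.cm_le_cp k (by omega)).trans (M.cp_lt_cm k (by omega)).le)

lemma cm_le_cm {j k : ℕ} (hjk : j ≤ k) (hk : k ≤ n) : M.cm j ≤ M.cm k := by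
  rcases hjk.eq_or_lt with rfl | hlt
  · rfl
  · exact (M.cm_le_cp j (by omega)).trans (M.cp_lt_cm_of_lt hlt hk).le

lemma cp_le_cp {j k : ℕ} (hjk : j ≤ k) (hk : k ≤ n) : M.cp j ≤ M.cp k := by
  rcases hjk.eq_or_lt with rfl | hlt
  · rfl
  · exact (M.cp_lt_cm_of_lt hlt hk).le.trans (M.cm_le_cp k hk)

lemma cm_le_cp_of_le {j k : ℕ} (hjk : j ≤ k) (hk : k ≤ n) : M.cm j ≤ M.cp k :=
  (M.cm_le_cm hjk hk).trans (M.cm_le_cp k hk)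

lemma Ipart_subset_itv {j : ℕ} (hj : j < n) : M.Ipart j ⊆ M.itv := fun _ hz =>
  ⟨M.cm_zero.trans_le ((M.cp_le_cp j.zero_le hj.le).trans hz.1),
    hz.2.trans (M.cm_le_cm hj le_rfl)⟩

lemma interior_Ipart (j : ℕ) : interior (M.Ipart j) = Set.Ioo (M.cp j) (M.cm (j + 1)) :=
  interior_Icc

lemma mem_dom_iff {z : ℝ} : z ∈ M.dom ↔ ∃ j < n, z ∈ M.Ipart j := by
  simp [dom]

lemma disjoint_interior_Ipart_Gamma {j : ℕ} (hj : j < n) :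
    Disjoint (interior (M.Ipart j)) M.Gamma := by
  rw [M.interior_Ipart, Set.disjoint_left]
  rintro z ⟨hz₁, hz₂⟩ ⟨k, hk, rfl | rfl⟩ <;> rcases le_or_gt k j with hkj | hkj
  · linarith [M.cm_le_cp_of_le hkj hj.le]
  · linarith [M.cm_le_cm hkj hk]
  · linarith [M.cp_le_cp hkj hj.le]
  · linarith [M.cm_le_cp_of_le hkj hk]

lemma mem_interior_Ipart_of_notMem_Gamma {j : ℕ} (hj : j < n) {z : ℝ} (hz : z ∈ M.Ipart j)
    (hzΓ : z ∉ M.Gamma) : z ∈ interior (M.Ipart j) := by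
  rw [M.interior_Ipart]
  exact ⟨hz.1.lt_of_ne fun h => hzΓ ⟨j, hj.le, Or.inr h.symm⟩,
    hz.2.lt_of_ne fun h => hzΓ ⟨j + 1, hj, Or.inl h⟩⟩

lemma mem_Gamma_of_mem_Ipart_of_mem_Ipart {j k : ℕ} (hj : j < n) (hk : k < n) (hjk : j ≠ k)
    {z : ℝ} (hzj : z ∈ M.Ipart j) (hzk : z ∈ M.Ipart k) : z ∈ M.Gamma := by
  wlog hlt : j < k generalizing j k
  · exact this hk hj hjk.symm hzk hzj (by omega)
  have : M.cm (j + 1) ≤ M.cp k := M.cm_le_cp_of_le hlt hk.le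
  exact ⟨j + 1, hlt.trans_le hk.le, Or.inl (le_antisymm hzj.2 (by linarith [hzk.1]))⟩

lemma disjoint_Ipart_Epart {j k : ℕ} (hj : j < n) (hk : k ≤ n) :
    Disjoint (M.Ipart j) (M.Epart k) := by
  rw [Set.disjoint_left]
  rintro z ⟨hz₁, hz₂⟩ ⟨hk₁, hk₂⟩
  rcases le_or_gt k j with hkj | hkj
  · linarith [M.cp_le_cp hkj hj.le]
  · linarith [M.cm_le_cm hkj hk]

lemma disjoint_Epart_Gamma {j : ℕ} (hj : j ≤ n) : Disjoint (M.Epart j) M.Gamma := by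
  rw [Set.disjoint_left]
  rintro z ⟨hz₁, hz₂⟩ ⟨k, hk, rfl | rfl⟩ <;> rcases lt_trichotomy k j with hkj | rfl | hkj
  · linarith [M.cm_le_cp k hk, M.cp_lt_cm_of_lt hkj hj]
  · linarith
  · linarith [M.cp_lt_cm_of_lt hkj hk]
  · linarith [M.cp_lt_cm_of_lt hkj hj]
  · linarith
  · linarith [M.cp_lt_cm_of_lt hkj hk, M.cm_le_cp k hk]

lemma eq_of_mem_Epart_of_mem_Epart {j k : ℕ} (hj : j ≤ n) (hk : k ≤ n) {z : ℝ}
    (hzj : z ∈ M.Epart j) (hzk : z ∈ M.Epart k) : j = k := by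
  by_contra hne
  rcases Nat.lt_or_gt_of_ne hne with hlt | hlt
  · linarith [hzj.2, hzk.1, M.cp_lt_cm_of_lt hlt hk]
  · linarith [hzj.1, hzk.2, M.cp_lt_cm_of_lt hlt hj]

variable {M}

lemma F_injOn (hM : IsMarkov M) {i : ℕ} (hi : i < n) : Set.InjOn (M.F i) (M.Ipart i) :=
  (hM.mono i hi).elim StrictMonoOn.injOn StrictAntiOn.injOn

lemma f_eq_F_of_notMem_Gamma (hM : IsMarkov M) {j : ℕ} (hj : j < n) {z : ℝ}
    (hz : z ∈ M.Ipart j) (hzΓ : z ∉ M.Gamma) : M.f z = M.F j z :=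
  hM.compat₁ j hj z hz fun _ hk hkj hzk =>
    hzΓ (M.mem_Gamma_of_mem_Ipart_of_mem_Ipart hj hk hkj.symm hz hzk)

lemma exists_piece_of_mem_image (hM : IsMarkov M) {i : ℕ} (hi : i < n) {y : ℝ}
    (hy : y ∈ M.F i '' M.Ipart i) :
    (∃ k < n, y ∈ M.Ipart k ∧ M.Ipart k ⊆ M.F i '' M.Ipart i) ∨
      ∃ k ≤ n, y ∈ M.Epart k ∧ M.Epart k ⊆ M.F i '' M.Ipart i := by
  obtain ⟨S, T, hS, hT, himage⟩ := hM.markov i hi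
  rw [himage] at hy ⊢
  rcases hy with hy | hy <;> obtain ⟨k, hk, hyk⟩ := Set.mem_iUnion₂.1 hy
  · exact .inl ⟨k, hS hk, hyk, (Set.subset_biUnion_of_mem hk).trans Set.subset_union_left⟩
  · exact .inr ⟨k, (hT hk).2.le, hyk,
      (Set.subset_biUnion_of_mem (u := M.Epart) hk).trans Set.subset_union_right⟩

lemma Ipart_subset_image_of_mem (hM : IsMarkov M) {i j : ℕ} (hi : i < n) (hj : j < n) {z : ℝ}
    (hz : z ∈ M.Ipart j) (hzΓ : z ∉ M.Gamma) (hzK : z ∈ M.F i '' M.Ipart i) :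
    M.Ipart j ⊆ M.F i '' M.Ipart i := by
  rcases exists_piece_of_mem_image hM hi hzK with ⟨k, hk, hzk, hsub⟩ | ⟨k, hk, hzk, -⟩
  · obtain rfl : k = j := by
      by_contra hkj
      exact hzΓ (M.mem_Gamma_of_mem_Ipart_of_mem_Ipart hk hj hkj hzk hz)
    exact hsub
  · exact absurd hzk (Set.disjoint_left.1 (M.disjoint_Ipart_Epart hj hk) hz)

lemma Epart_subset_image_of_mem (hM : IsMarkov M) {i j : ℕ} (hi : i < n) (hj : j ≤ n) {y : ℝ}
    (hy : y ∈ M.Epart j) (hyK : y ∈ M.F i '' M.Ipart i) :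
    M.Epart j ⊆ M.F i '' M.Ipart i := by
  rcases exists_piece_of_mem_image hM hi hyK with ⟨k, hk, hyk, -⟩ | ⟨k, hk, hyk, hsub⟩
  · exact absurd hy (Set.disjoint_left.1 (M.disjoint_Ipart_Epart hk hj) hyk)
  · rwa [M.eq_of_mem_Epart_of_mem_Epart hj hk hy hyk]

lemma mem_interior_image_of_notMem_Gamma (hM : IsMarkov M) {i : ℕ} (hi : i < n) {y : ℝ}
    (hyK : y ∈ M.F i '' M.Ipart i) (hyΓ : y ∉ M.Gamma) :
    y ∈ interior (M.F i '' M.Ipart i) := by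
  rcases exists_piece_of_mem_image hM hi hyK with ⟨k, hk, hyk, hsub⟩ | ⟨k, -, hyk, hsub⟩
  · exact interior_mono hsub (M.mem_interior_Ipart_of_notMem_Gamma hk hyk hyΓ)
  · exact interior_maximal hsub isOpen_Ioo hyk

-- An endpoint of `I_i` is sent to an extreme point of `F_i(I_i)`, which is not interior.
lemma mem_interior_of_image_mem_interior (hM : IsMarkov M) {i : ℕ} (hi : i < n) {u : ℝ}
    (hu : u ∈ M.Ipart i) (hFu : M.F i u ∈ interior (M.F i '' M.Ipart i)) :
    u ∈ interior (M.Ipart i) := by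
  have hK := mem_interior_iff_mem_nhds.1 hFu
  obtain ⟨_, hlt, s, hs, rfl⟩ := ((frequently_lt_nhds (M.F i u)).and_eventually hK).exists
  obtain ⟨_, hgt, t, ht, rfl⟩ := ((frequently_gt_nhds (M.F i u)).and_eventually hK).exists
  rw [M.interior_Ipart]
  refine ⟨hu.1.lt_of_ne ?_, hu.2.lt_of_ne ?_⟩ <;> rintro rfl <;> rcases hM.mono i hi with h | h
  · exact (h.monotoneOn hu hs hs.1).not_gt hlt
  · exact (h.antitoneOn hu ht ht.1).not_gt hgt
  · exact (h.monotoneOn ht hu ht.2).not_gt hgt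
  · exact (h.antitoneOn hs hu hs.2).not_gt hlt

lemma F_mem_Gamma (hM : IsMarkov M) {i : ℕ} (hi : i < n) {z : ℝ} (hz : z ∈ M.Ipart i)
    (hzΓ : z ∈ M.Gamma) : M.F i z ∈ M.Gamma := by
  by_contra hFz
  have := mem_interior_of_image_mem_interior hM hi hz
    (mem_interior_image_of_notMem_Gamma hM hi ⟨z, hz, rfl⟩ hFz)
  exact Set.disjoint_left.1 (M.disjoint_interior_Ipart_Gamma hi) this hzΓ

lemma mem_image_iff_trans (hM : IsMarkov M) {i j : ℕ} (hi : i < n) (hj : j < n) {z : ℝ}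
    (hz : z ∈ M.Ipart j) (hzΓ : z ∉ M.Gamma) : z ∈ M.F i '' M.Ipart i ↔ M.trans i j := by
  constructor
  · intro hzK y hy
    have hyK := interior_mono (Ipart_subset_image_of_mem hM hi hj hz hzΓ hzK) hy
    obtain ⟨u, hu, rfl⟩ := interior_subset hyK
    exact ⟨u, mem_interior_of_image_mem_interior hM hi hu hyK, rfl⟩
  · intro htrans
    exact Set.image_mono interior_subset (htrans (M.mem_interior_Ipart_of_notMem_Gamma hj hz hzΓ))

lemma mem_image_iff_ahat (hM : IsMarkov M) {i j : ℕ} (hi : i < n) (hj : j ≤ n) {y : ℝ}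
    (hy : y ∈ M.Epart j) : y ∈ M.F i '' M.Ipart i ↔ M.ahat i j := by
  constructor
  · intro hyK
    have hyK' := interior_maximal (Epart_subset_image_of_mem hM hi hj hy hyK) isOpen_Ioo hy
    obtain ⟨u, hu, rfl⟩ := interior_subset hyK'
    exact ⟨u, mem_interior_of_image_mem_interior hM hi hu hyK', hy⟩
  · rintro ⟨u, hu, hFu⟩
    exact Epart_subset_image_of_mem hM hi hj hFu ⟨u, interior_subset hu, rfl⟩ hy

lemma definedUpTo_succ_iff {k : ℕ} {z : ℝ} :
    M.definedUpTo (k + 1) z ↔ z ∈ M.dom ∧ M.definedUpTo k (M.f z) := by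
  simp only [definedUpTo, Nat.forall_lt_succ_left, Function.iterate_zero_apply,
    Function.iterate_succ_apply]

lemma Rrel.f_right {x z : ℝ} (h : M.Rrel x z) (hz : z ∈ M.dom) : M.Rrel x (M.f z) := by
  obtain ⟨p, q, hx, hz', heq⟩ := h
  cases q with
  | zero =>
    refine ⟨p + 1, 0, fun l hl => ?_, fun _ h => absurd h (Nat.not_lt_zero _), ?_⟩
    · rcases Nat.lt_succ_iff_lt_or_eq.1 hl with hl | rfl
      exacts [hx l hl, heq ▸ hz]
    · rw [Function.iterate_succ_apply', heq, Function.iterate_zero_apply]; rfl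
  | succ q => exact ⟨p, q, hx, (definedUpTo_succ_iff.1 hz').2, heq⟩

lemma Rrel.of_f_right {x w : ℝ} (h : M.Rrel x (M.f w)) (hw : w ∈ M.dom) : M.Rrel x w := by
  obtain ⟨p, q, hx, hw', heq⟩ := h
  exact ⟨p, q + 1, hx, definedUpTo_succ_iff.2 ⟨hw, hw'⟩, heq⟩

lemma iterate_mem_Gamma (hM : IsMarkov M) {k : ℕ} {z : ℝ} (hz : z ∈ M.Gamma)
    (hk : M.definedUpTo k z) : M.f^[k] z ∈ M.Gamma := by
  induction k generalizing z with
  | zero => exact hz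
  | succ k ih =>
    obtain ⟨hzd, hk⟩ := definedUpTo_succ_iff.1 hk
    obtain ⟨j, hj, hzj, hfz⟩ := hM.compat₂ z hzd
    exact ih (hfz ▸ F_mem_Gamma hM hj hzj hz) hk

lemma e_notMem_dom {x : ℝ} (hx : x ∈ M.Esc) : M.e x ∉ M.dom := by
  have hesc : ∃ k, M.f^[k] x ∉ M.dom := by
    by_contra! h
    exact hx.2 ⟨hx.1, h⟩
  exact Nat.sInf_mem hesc

lemma definedUpTo_tau (x : ℝ) : M.definedUpTo (M.tau x) x := fun _ hl => by
  by_contra h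
  exact Nat.notMem_of_lt_sInf hl h

lemma le_tau_of_definedUpTo {x : ℝ} (hx : x ∈ M.Esc) {p : ℕ} (hp : M.definedUpTo p x) :
    p ≤ M.tau x := by
  by_contra! h
  exact e_notMem_dom hx (hp _ h)

lemma disjoint_Rclass_Gamma (hM : IsMarkov M) {x : ℝ} (hx : x ∈ M.Esc) {j : ℕ} (hj : j ≤ n)
    (hex : M.e x ∈ M.Epart j) : Disjoint (M.Rclass x) M.Gamma := by
  rw [Set.disjoint_left]
  rintro z ⟨-, p, q, hp, hq, heq⟩ hzΓ
  have hpτ := le_tau_of_definedUpTo hx hp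
  have hxp : M.f^[p] x ∈ M.Gamma := heq ▸ iterate_mem_Gamma hM hzΓ hq
  have hdef : M.definedUpTo (M.tau x - p) (M.f^[p] x) := fun l hl => by
    rw [← Function.iterate_add_apply]
    exact M.definedUpTo_tau x _ (by omega)
  have hexΓ := iterate_mem_Gamma hM hxp hdef
  rw [← Function.iterate_add_apply, Nat.sub_add_cancel hpτ] at hexΓ
  exact Set.disjoint_left.1 (M.disjoint_Epart_Gamma hj) hex hexΓ

lemma eq_e_of_mem_Rclass {x z : ℝ} (hx : x ∈ M.Esc) (hz : z ∈ M.Rclass x) (hzd : z ∉ M.dom) :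
    z = M.e x := by
  obtain ⟨-, p, q, hp, hq, heq⟩ := hz
  obtain rfl : q = 0 := by
    by_contra hq0
    exact hzd (hq 0 (Nat.pos_of_ne_zero hq0))
  rw [Function.iterate_zero_apply] at heq
  have hτp : M.tau x ≤ p := Nat.sInf_le (show M.f^[p] x ∉ M.dom from heq ▸ hzd)
  rw [← heq, e, le_antisymm (le_tau_of_definedUpTo hx hp) hτp]

lemma F_mem_Rclass (hM : IsMarkov M) {x : ℝ} (hΓ : Disjoint (M.Rclass x) M.Gamma) {j : ℕ}
    (hj : j < n) {z : ℝ} (hz : z ∈ M.Rclass x) (hzj : z ∈ M.Ipart j) : M.F j z ∈ M.Rclass x := by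
  have hfz := f_eq_F_of_notMem_Gamma hM hj hzj (Set.disjoint_left.1 hΓ hz)
  exact ⟨hM.maps_into j hj ⟨z, hzj, rfl⟩, hfz ▸ hz.2.f_right (M.mem_dom_iff.2 ⟨j, hj, hzj⟩)⟩

lemma mem_Rclass_of_F_mem (hM : IsMarkov M) {x : ℝ} (hΓ : Disjoint (M.Rclass x) M.Gamma)
    {j : ℕ} (hj : j < n) {w : ℝ} (hwj : w ∈ M.Ipart j) (hw : M.F j w ∈ M.Rclass x) :
    w ∈ M.Rclass x := by
  have hwΓ : w ∉ M.Gamma := fun h => Set.disjoint_left.1 hΓ hw (F_mem_Gamma hM hj hwj h)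
  have hfw := f_eq_F_of_notMem_Gamma hM hj hwj hwΓ
  exact ⟨M.Ipart_subset_itv hj hwj, (hfw ▸ hw.2).of_f_right (M.mem_dom_iff.2 ⟨j, hj, hwj⟩)⟩

end MarkovSystem

section lp

variable {ι 𝕜 : Type*} [DecidableEq ι] [RCLike 𝕜]

lemma lp.continuousLinearMap_ext_single {A B : lp (fun _ : ι => 𝕜) 2 →L[𝕜] lp (fun _ : ι => 𝕜) 2}
    (h : ∀ i, A (lp.single 2 i 1) = B (lp.single 2 i 1)) : A = B := by
  ext1 g
  have hsum := lp.hasSum_single ENNReal.ofNat_ne_top g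
  have hsingle : ∀ i, (lp.single 2 i (g i) : lp (fun _ : ι => 𝕜) 2) = g i • lp.single 2 i 1 :=
    fun i => by rw [← lp.single_smul, smul_eq_mul, mul_one]
  simp only [hsingle] at hsum
  refine (hsum.mapL A).unique ?_
  simpa only [map_smul, h] using hsum.mapL B

lemma lp.star_apply_single_apply (A : lp (fun _ : ι => 𝕜) 2 →L[𝕜] lp (fun _ : ι => 𝕜) 2)
    (a b : ι) : (star A (lp.single 2 a 1)) b = star ((A (lp.single 2 b 1)) a) := by
  have hcoord : ∀ (v : lp (fun _ : ι => 𝕜) 2) (c : ι), v c = inner 𝕜 (lp.single 2 c 1) v :=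
    fun v c => by simp [lp.inner_single_left]
  rw [hcoord, hcoord, ContinuousLinearMap.star_eq_adjoint,
    ContinuousLinearMap.adjoint_inner_right]
  exact (inner_conj_symm _ _).symm

end lp

namespace MarkovSystem

variable {n : ℕ} {M : MarkovSystem n} {x : ℝ} {i : ℕ} {T : M.Hsp x →L[ℂ] M.Hsp x}

lemma IsBranchOp.apply_dvec_apply (hT : M.IsBranchOp x i T) (hM : IsMarkov M) (hi : i < n)
    (hΓ : Disjoint (M.Rclass x) M.Gamma) (a b : M.Rclass x) :
    T (M.dvec b) a = if (a : ℝ) ∈ M.Ipart i ∧ M.F i a = b then 1 else 0 := by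
  by_cases hb : (b : ℝ) ∈ M.F i '' M.Ipart i
  · obtain ⟨w, hw, hwb⟩ := hb
    have hwR := mem_Rclass_of_F_mem hM hΓ hi hw (hwb ▸ b.2)
    have ha : a = ⟨w, hwR⟩ ↔ (a : ℝ) ∈ M.Ipart i ∧ M.F i a = b := by
      refine ⟨fun h => h ▸ ⟨hw, hwb⟩, fun ⟨ha, hab⟩ => Subtype.ext ?_⟩
      exact F_injOn hM hi ha hw (hab.trans hwb.symm)
    rw [hT.1 b ⟨w, hwR⟩ hw hwb, dvec, lp.single_apply, Pi.single_apply]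
    exact if_congr ha rfl rfl
  · rw [hT.2 b hb, if_neg fun h => hb ⟨a, h.1, h.2⟩]
    rfl

lemma IsBranchOp.star_apply_dvec (hT : M.IsBranchOp x i T) (hM : IsMarkov M) (hi : i < n)
    (hΓ : Disjoint (M.Rclass x) M.Gamma) {a : M.Rclass x} (ha : (a : ℝ) ∈ M.Ipart i) :
    star T (M.dvec a) = M.dvec ⟨M.F i a, F_mem_Rclass hM hΓ hi a.2 ha⟩ := by
  refine lp.ext (funext fun b => ?_)
  have hb : star T (M.dvec a) b = star (T (M.dvec b) a) := lp.star_apply_single_apply T a b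
  rw [hb, hT.apply_dvec_apply hM hi hΓ, dvec, lp.single_apply, Pi.single_apply]
  simp [ha, Subtype.ext_iff, eq_comm]

lemma IsBranchOp.star_apply_dvec_of_notMem (hT : M.IsBranchOp x i T) (hM : IsMarkov M)
    (hi : i < n) (hΓ : Disjoint (M.Rclass x) M.Gamma) {a : M.Rclass x}
    (ha : (a : ℝ) ∉ M.Ipart i) : star T (M.dvec a) = 0 := by
  refine lp.ext (funext fun b => ?_)
  have hb : star T (M.dvec a) b = star (T (M.dvec b) a) := lp.star_apply_single_apply T a b
  rw [hb, hT.apply_dvec_apply hM hi hΓ]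
  simp [ha]

lemma IsBranchOp.star_mul_self_apply_dvec (hT : M.IsBranchOp x i T) (hM : IsMarkov M)
    (hi : i < n) (hΓ : Disjoint (M.Rclass x) M.Gamma) (z : M.Rclass x) :
    (star T * T) (M.dvec z) = if (z : ℝ) ∈ M.F i '' M.Ipart i then M.dvec z else 0 := by
  rw [mul_apply_eq_comp]
  split_ifs with hz
  · obtain ⟨w, hw, hwz⟩ := hz
    have hwR := mem_Rclass_of_F_mem hM hΓ hi hw (hwz ▸ z.2)
    rw [hT.1 z ⟨w, hwR⟩ hw hwz, hT.star_apply_dvec hM hi hΓ hw]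
    simp only [hwz]
  · rw [hT.2 z hz, map_zero]

lemma IsBranchOp.mul_star_self_apply_dvec (hT : M.IsBranchOp x i T) (hM : IsMarkov M)
    (hi : i < n) (hΓ : Disjoint (M.Rclass x) M.Gamma) (z : M.Rclass x) :
    (T * star T) (M.dvec z) = if (z : ℝ) ∈ M.Ipart i then M.dvec z else 0 := by
  rw [mul_apply_eq_comp]
  split_ifs with hz
  · exact (hT.star_apply_dvec hM hi hΓ hz).symm ▸ hT.1 _ z hz rfl
  · rw [hT.star_apply_dvec_of_notMem hM hi hΓ hz, map_zero]

lemma sum_trans_mul_star_apply_dvec_of_mem {T : ℕ → M.Hsp x →L[ℂ] M.Hsp x}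
    (hT : ∀ j < n, M.IsBranchOp x j (T j)) (hM : IsMarkov M) (hΓ : Disjoint (M.Rclass x) M.Gamma)
    {j : ℕ} (hj : j < n) {z : M.Rclass x} (hzj : (z : ℝ) ∈ M.Ipart j) :
    (∑ k ∈ Finset.range n, if M.trans i k then T k * star (T k) else 0) (M.dvec z) =
      if M.trans i j then M.dvec z else 0 := by
  rw [sum_apply, Finset.sum_eq_single_of_mem j (Finset.mem_range.2 hj)]
  · split_ifs <;> simp [(hT j hj).mul_star_self_apply_dvec hM hj hΓ, hzj]
  · intro k hk hkj
    have hk := Finset.mem_range.1 hk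
    have hzk : (z : ℝ) ∉ M.Ipart k := fun h => Set.disjoint_left.1 hΓ z.2
      (M.mem_Gamma_of_mem_Ipart_of_mem_Ipart hk hj hkj h hzj)
    split_ifs <;> simp [(hT k hk).mul_star_self_apply_dvec hM hk hΓ, hzk]

lemma sum_trans_mul_star_apply_dvec_of_notMem_dom {T : ℕ → M.Hsp x →L[ℂ] M.Hsp x}
    (hT : ∀ j < n, M.IsBranchOp x j (T j)) (hM : IsMarkov M) (hΓ : Disjoint (M.Rclass x) M.Gamma)
    {z : M.Rclass x} (hz : (z : ℝ) ∉ M.dom) :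
    (∑ k ∈ Finset.range n, if M.trans i k then T k * star (T k) else 0) (M.dvec z) = 0 := by
  rw [sum_apply]
  refine Finset.sum_eq_zero fun k hk => ?_
  have hk := Finset.mem_range.1 hk
  have hzk : (z : ℝ) ∉ M.Ipart k := fun h => hz (M.mem_dom_iff.2 ⟨k, hk, h⟩)
  split_ifs <;> simp [(hT k hk).mul_star_self_apply_dvec hM hk hΓ, hzk]

end MarkovSystem

/-- For `x ∈ E_f` with escape index `ι(x) = j₀`, one has
`T_i* T_i = ∑_j a_{ij} T_j T_j* + â_{i,ι(x)} P_{e(x)}` for every `i`. -/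
theorem TstarT_decomposition {n : ℕ} (M : MarkovSystem n) (hM : IsMarkov M)
    {x : ℝ} (hx : x ∈ M.Esc) {j0 : ℕ} (hj0 : 1 ≤ j0 ∧ j0 < n)
    (hex : M.e x ∈ M.Epart j0)
    (T : ℕ → (M.Hsp x →L[ℂ] M.Hsp x)) (hT : ∀ i < n, M.IsBranchOp x i (T i))
    (Pe : M.Hsp x →L[ℂ] M.Hsp x) (hPe : M.IsEscProj x Pe) :
    ∀ i < n, star (T i) * T i =
      (∑ j ∈ Finset.range n, if M.trans i j then T j * star (T j) else 0) +
      (if M.ahat i j0 then Pe else 0) := by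
  intro i hi
  have hΓ := M.disjoint_Rclass_Gamma hM hx hj0.2.le hex
  refine lp.continuousLinearMap_ext_single fun z => ?_
  show (star (T i) * T i) (M.dvec z) = (_ : M.Hsp x →L[ℂ] M.Hsp x) (M.dvec z)
  have hPez : (if M.ahat i j0 then Pe else 0) (M.dvec z) =
      if M.ahat i j0 ∧ (z : ℝ) = M.e x then M.dvec z else 0 := by
    by_cases ha : M.ahat i j0 <;> simp [ha, hPe z]
  rw [(hT i hi).star_mul_self_apply_dvec hM hi hΓ, add_apply, hPez]
  by_cases hz : (z : ℝ) ∈ M.dom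
  · obtain ⟨j, hj, hzj⟩ := M.mem_dom_iff.1 hz
    have hze : (z : ℝ) ≠ M.e x := fun h => M.e_notMem_dom hx (h ▸ hz)
    rw [M.sum_trans_mul_star_apply_dvec_of_mem hT hM hΓ hj hzj,
      M.mem_image_iff_trans hM hi hj hzj (Set.disjoint_left.1 hΓ z.2)]
    simp [hze]
  · have hze := M.eq_e_of_mem_Rclass hx z.2 hz
    rw [M.sum_trans_mul_star_apply_dvec_of_notMem_dom hT hM hΓ hz, hze,
      M.mem_image_iff_ahat hM hi hj0.2.le hex]
    simp
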